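/- arXiv:0911.5146 — 3 statements merged into one kernel-verified Lean document; each statement's English description precedes it below -/
import Mathlib

section
/- Let n ≥ 2 and write Ψ ∈ ℂ² ⊗ ℂⁿ ≅ ℂⁿ ⊕ ℂⁿ as Ψ = (α, β). Define μ₀₀(Ψ) as the 2×2 block matrix with blocks ((1/2)(αα* − ββ*)₀, (αβ*)₀; (βα*)₀, (1/2)(ββ* − αα*)₀), where ( )₀ denotes the trace-free part of an n×n matrix. If μ₀₀(Ψ) = 0 then Ψ = 0. -/
open Matrix

/-- Trace-free part of an `n × n` complex matrix. -/
noncomputable def tf {n : ℕ} (M : Matrix (Fin n) (Fin n) ℂ) : Matrix (Fin n) (Fin n) ℂ :=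
  M - (M.trace / (n : ℂ)) • 1

/-- The rank-one matrix `α β*` with entries `αᵢ · conj βⱼ`. -/
noncomputable def op {n : ℕ} (α β : Fin n → ℂ) : Matrix (Fin n) (Fin n) ℂ :=
  vecMulVec α (star β)

/-- The quadratic map `μ₀₀` on `ℂ² ⊗ ℂⁿ ≅ ℂⁿ ⊕ ℂⁿ`, written in `2 × 2` blocks of
`n × n` matrices (bilinear version, `Ψ = (α,β)`, `Φ = (α',β')`). -/
noncomputable def mu00 {n : ℕ} (α β α' β' : Fin n → ℂ) :
    Matrix (Fin n ⊕ Fin n) (Fin n ⊕ Fin n) ℂ :=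
  fromBlocks ((1/2 : ℂ) • tf (op α α' - op β β')) (tf (op α β'))
    (tf (op β α')) ((1/2 : ℂ) • tf (op β β' - op α α'))

/-- A rank-one matrix which is scalar must vanish (n ≥ 2). -/
lemma rank_one_scalar {n : ℕ} (hn : 2 ≤ n) (a b : Fin n → ℂ) (c : ℂ)
    (h : ∀ i j, a i * b j = if i = j then c else 0) : ∀ i j, a i * b j = 0 := by
  have hne : (⟨0, by omega⟩ : Fin n) ≠ ⟨1, by omega⟩ := by
    simp [Fin.ext_iff]
  have hc : c = 0 := by
    have h01 := h ⟨0, by omega⟩ ⟨1, by omega⟩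
    rw [if_neg hne] at h01
    rcases mul_eq_zero.mp h01 with ha | hb
    · have := h ⟨0, by omega⟩ ⟨0, by omega⟩
      simp [ha] at this; exact this.symm
    · have := h ⟨1, by omega⟩ ⟨1, by omega⟩
      simp [hb] at this; exact this.symm
  intro i j
  have := h i j
  rw [hc] at this
  simpa using this

/-- if `μ₀₀(Ψ) = 0` then `Ψ = 0`. -/
theorem stmt_1 (n : ℕ) (hn : 2 ≤ n) (α β : Fin n → ℂ)
    (h : mu00 α β α β = 0) : α = 0 ∧ β = 0 := by
  have hn0 : (0:ℕ) < n := by omega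
  have hB : tf (op α β) = 0 := by
    ext i j
    have := congrFun (congrFun h (Sum.inl i)) (Sum.inr j)
    simpa [mu00, fromBlocks] using this
  have hA : tf (op α α - op β β) = 0 := by
    ext i j
    have := congrFun (congrFun h (Sum.inl i)) (Sum.inl j)
    simp only [mu00, fromBlocks, Matrix.zero_apply, of_apply, Sum.elim_inl,
      Matrix.smul_apply, smul_eq_mul] at this
    have : tf (op α α - op β β) i j = 0 := by
      field_simp at this; simpa using this
    simpa using this
  set cB := (vecMulVec α (star β)).trace / (n : ℂ) with hcB
  set cA := ((vecMulVec α (star α)).trace - (vecMulVec β (star β)).trace) / (n : ℂ) with hcA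
  have hBs : ∀ i j, α i * (starRingEnd ℂ) (β j) = if i = j then cB else 0 := by
    intro i j
    have := congrFun (congrFun hB i) j
    simp only [tf, Matrix.sub_apply, Matrix.smul_apply, Matrix.one_apply,
      smul_eq_mul] at this
    have h' := sub_eq_zero.mp (by simpa [op, vecMulVec_apply, Pi.star_apply, mul_ite,
      mul_zero, mul_one, hcB] using this)
    exact h'
  have hAs : ∀ i j, α i * (starRingEnd ℂ) (α j) - β i * (starRingEnd ℂ) (β j) =
      if i = j then cA else 0 := by
    intro i j
    have := congrFun (congrFun hA i) j
    simp only [tf, Matrix.sub_apply, Matrix.smul_apply, Matrix.one_apply,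
      smul_eq_mul] at this
    have h' := sub_eq_zero.mp (by simpa [op, vecMulVec_apply, Pi.star_apply, mul_ite,
      mul_zero, mul_one, hcA] using this)
    exact h'
  have hB0 : ∀ i j, α i * (starRingEnd ℂ) (β j) = 0 :=
    rank_one_scalar hn α (fun j => (starRingEnd ℂ) (β j)) _ hBs
  have hα : α = 0 := by
    by_contra hα
    obtain ⟨i, hi⟩ := Function.ne_iff.mp hα
    have hβ : β = 0 := by
      funext j
      have := hB0 i j
      rcases mul_eq_zero.mp this with h1 | h2
      · exact absurd h1 hi
      · simpa using (starRingEnd ℂ).injective (by simpa using h2)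
    have hAs' : ∀ i' j, α i' * (starRingEnd ℂ) (α j) = if i' = j then cA else 0 := by
      intro i' j
      have := hAs i' j
      rw [hβ] at this
      simpa using this
    have := rank_one_scalar hn α (fun j => (starRingEnd ℂ) (α j)) _ hAs' i i
    rcases mul_eq_zero.mp this with h1 | h2
    · exact hi h1
    · exact hi ((starRingEnd ℂ).injective (by simpa using h2))
  have hAs'' : ∀ i j, β i * (starRingEnd ℂ) (β j) = if i = j then -cA else 0 := by
    intro i j
    have := hAs i j
    rw [hα] at this
    simp only [Pi.zero_apply, zero_mul, zero_sub, neg_eq_iff_eq_neg] at this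
    rw [this]
    split <;> simp
  have hβ : β = 0 := by
    funext j
    have := rank_one_scalar hn β (fun j => (starRingEnd ℂ) (β j)) _ hAs'' j j
    rcases mul_eq_zero.mp this with h1 | h2
    · exact h1
    · exact (starRingEnd ℂ).injective (by simpa using h2)
  exact ⟨hα, hβ⟩
end

section
/- Let n ≥ 2. There exists a constant c > 0 such that for all Ψ = (α,β) ∈ ℂⁿ ⊕ ℂⁿ, the quadratic map μ₀₀ defined by the block matrix ((1/2)(αα* − ββ*)₀, (αβ*)₀; (βα*)₀, (1/2)(ββ* − αα*)₀) satisfies ‖μ₀₀(Ψ)‖ ≥ c‖Ψ‖². -/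
open Matrix

/-- Frobenius (Hilbert–Schmidt) norm of a matrix. -/
noncomputable def fnorm {I J : Type*} [Fintype I] [Fintype J] (M : Matrix I J ℂ) : ℝ :=
  Real.sqrt (∑ i, ∑ j, ‖M i j‖ ^ 2)

section MyAux
open Complex

lemma hns (z : ℂ) : ‖z‖^2 = Complex.normSq z := by
  rw [Complex.sq_norm]

lemma sum_sq_tf {n : ℕ} (hn : 0 < n) (M : Matrix (Fin n) (Fin n) ℂ) :
    ∑ i, ∑ j, ‖(M - (M.trace / (n : ℂ)) • 1) i j‖^2
      = (∑ i, ∑ j, ‖M i j‖^2) - ‖M.trace‖^2 / n := by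
  set c : ℂ := M.trace / n with hc
  have hentry : ∀ i j : Fin n, ‖(M - c • (1 : Matrix (Fin n) (Fin n) ℂ)) i j‖^2
      = ‖M i j‖^2 + (if j = i then Complex.normSq c - 2 * (M i i * (starRingEnd ℂ) c).re else 0) := by
    intro i j
    by_cases h : j = i
    · subst h
      rw [if_pos rfl]
      simp only [Matrix.sub_apply, Matrix.smul_apply, Matrix.one_apply_eq, smul_eq_mul, mul_one,
        hns, Complex.normSq_sub]
      ring
    · simp [Matrix.sub_apply, Matrix.smul_apply, Matrix.one_apply, (Ne.symm h : i ≠ j), h]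
  simp only [hentry, Finset.sum_add_distrib, Finset.sum_ite_eq' Finset.univ _ _]
  simp only [Finset.mem_univ, if_true, Finset.sum_sub_distrib, Finset.sum_const,
    Finset.card_univ, Fintype.card_fin, nsmul_eq_mul]
  have h1 : ∑ i : Fin n, 2 * (M i i * (starRingEnd ℂ) c).re = 2 * ((M.trace) * (starRingEnd ℂ) c).re := by
    rw [← Finset.mul_sum, ← Complex.re_sum, ← Finset.sum_mul]
    rfl
  rw [h1]
  have hn' : (n : ℝ) ≠ 0 := Nat.cast_ne_zero.2 hn.ne'
  have h2 : (M.trace * (starRingEnd ℂ) c).re = Complex.normSq M.trace / n := by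
    rw [hc, map_div₀, map_natCast, ← mul_div_assoc, Complex.mul_conj,
      ← Complex.ofReal_natCast, ← Complex.ofReal_div, Complex.ofReal_re]
  have h3 : Complex.normSq c = Complex.normSq M.trace / n^2 := by
    rw [hc, normSq_div]
    congr 1
    rw [← Complex.ofReal_natCast, Complex.normSq_ofReal]
    ring
  rw [h2, h3, hns]
  field_simp
  ring

lemma sum_sq_op {n : ℕ} (α β : Fin n → ℂ) :
    ∑ i, ∑ j, ‖op α β i j‖^2 = (∑ i, ‖α i‖^2) * (∑ j, ‖β j‖^2) := by
  rw [Finset.sum_mul_sum]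
  simp [op, vecMulVec_apply, norm_mul, mul_pow]

lemma trace_op {n : ℕ} (α β : Fin n → ℂ) :
    (op α β).trace = ∑ i, α i * (starRingEnd ℂ) (β i) := by
  simp [Matrix.trace, Matrix.diag, op, vecMulVec_apply, RCLike.star_def]

lemma sum_sq_diff {n : ℕ} (α β : Fin n → ℂ) :
    ∑ i, ∑ j, ‖(op α α - op β β) i j‖^2
      = (∑ i, ‖α i‖^2)^2 + (∑ i, ‖β i‖^2)^2
        - 2 * ‖∑ i, α i * (starRingEnd ℂ) (β i)‖^2 := by
  have key : ∀ i j : Fin n, ‖(op α α - op β β) i j‖^2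
      = ‖α i‖^2 * ‖α j‖^2 + ‖β i‖^2 * ‖β j‖^2
        - 2 * ((α i * (starRingEnd ℂ) (β i)) * (β j * (starRingEnd ℂ) (α j))).re := by
    intro i j
    simp only [Matrix.sub_apply, op, vecMulVec_apply, Pi.star_apply, hns, Complex.normSq_sub,
      Complex.normSq_mul]
    rw [show (starRingEnd ℂ) (β i * star (β j)) = (starRingEnd ℂ) (β i) * β j by
      simp [RCLike.star_def]]
    simp [RCLike.star_def, Complex.normSq_conj]
    ring_nf
  simp only [key, Finset.sum_sub_distrib, Finset.sum_add_distrib, ← Finset.mul_sum,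
    ← Finset.sum_mul]
  have hre : ∑ i : Fin n, ∑ j : Fin n,
      ((α i * (starRingEnd ℂ) (β i)) * (β j * (starRingEnd ℂ) (α j))).re
      = ‖∑ i, α i * (starRingEnd ℂ) (β i)‖^2 := by
    simp only [← Complex.re_sum]
    rw [← Fintype.sum_mul_sum]
    have hconj : (∑ j, β j * (starRingEnd ℂ) (α j))
        = (starRingEnd ℂ) (∑ i, α i * (starRingEnd ℂ) (β i)) := by
      rw [map_sum]
      refine Finset.sum_congr rfl fun j _ => ?_
      simp [mul_comm]
    rw [hconj, Complex.mul_conj, hns (∑ i, α i * (starRingEnd ℂ) (β i)), Complex.ofReal_re]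
  rw [hre]
  ring

lemma cs_lem {n : ℕ} (α β : Fin n → ℂ) :
    ‖∑ i, α i * (starRingEnd ℂ) (β i)‖^2 ≤ (∑ i, ‖α i‖^2) * (∑ i, ‖β i‖^2) := by
  have h1 : ‖∑ i, α i * (starRingEnd ℂ) (β i)‖ ≤ ∑ i, ‖α i‖ * ‖β i‖ := by
    refine le_trans (norm_sum_le _ _) (le_of_eq (Finset.sum_congr rfl fun i _ => ?_))
    rw [norm_mul, RCLike.norm_conj]
  calc ‖∑ i, α i * (starRingEnd ℂ) (β i)‖^2 ≤ (∑ i, ‖α i‖ * ‖β i‖)^2 := by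
        exact pow_le_pow_left₀ (norm_nonneg _) h1 2
    _ ≤ (∑ i, ‖α i‖^2) * (∑ i, ‖β i‖^2) := Finset.sum_mul_sq_le_sq_mul_sq _ _ _

lemma smul_half {n : ℕ} (M : Matrix (Fin n) (Fin n) ℂ) :
    ∑ i, ∑ j, ‖((1/2 : ℂ) • M) i j‖^2 = (1/4) * ∑ i, ∑ j, ‖M i j‖^2 := by
  have h2 : ‖(1/2 : ℂ)‖ = 1/2 := by norm_num
  simp only [Matrix.smul_apply, norm_smul, h2, mul_pow, Finset.mul_sum]
  norm_num

lemma trace_self {n : ℕ} (α : Fin n → ℂ) :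
    (op α α).trace = ((∑ i, ‖α i‖^2 : ℝ) : ℂ) := by
  rw [trace_op]
  push_cast
  refine Finset.sum_congr rfl fun i _ => ?_
  rw [Complex.mul_conj, ← hns]
  push_cast
  ring

end MyAux

/-- uniform properness of `μ₀₀`: there is `c > 0` with
`‖μ₀₀(Ψ)‖ ≥ c ‖Ψ‖²` for all `Ψ = (α, β)`, where `‖Ψ‖² = ‖α‖² + ‖β‖²` (Euclidean). -/
theorem stmt_2 (n : ℕ) (hn : 2 ≤ n) :
    ∃ c : ℝ, 0 < c ∧ ∀ α β : Fin n → ℂ,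
      c * ((∑ i, ‖α i‖ ^ 2) + ∑ i, ‖β i‖ ^ 2) ≤ fnorm (mu00 α β α β) := by

  have hn0 : 0 < n := lt_of_lt_of_le (by norm_num) hn
  have hn2r : (2 : ℝ) ≤ (n : ℝ) := by exact_mod_cast hn
  have hnr : (0 : ℝ) < (n : ℝ) := by exact_mod_cast hn0
  refine ⟨1/2, by norm_num, fun α β => ?_⟩
  set a : ℝ := ∑ i, ‖α i‖^2 with ha
  set b : ℝ := ∑ i, ‖β i‖^2 with hb
  set t : ℂ := ∑ i, α i * (starRingEnd ℂ) (β i) with ht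
  set T : ℝ := ‖t‖^2 with hT
  have ha0 : 0 ≤ a := Finset.sum_nonneg fun i _ => by positivity
  have hb0 : 0 ≤ b := Finset.sum_nonneg fun i _ => by positivity
  have hT0 : 0 ≤ T := by positivity
  have hCS : T ≤ a * b := cs_lem α β
  -- conj trick
  have hconj : (∑ i, β i * (starRingEnd ℂ) (α i)) = (starRingEnd ℂ) t := by
    rw [ht, map_sum]
    exact Finset.sum_congr rfl fun j _ => by simp [mul_comm]
  -- the four blocks
  have hA : ∑ i, ∑ j, ‖tf (op α α - op β β) i j‖^2
      = (a^2 + b^2 - 2*T) - (a - b)^2 / n := by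
    rw [show tf (op α α - op β β) = (op α α - op β β) -
        (((op α α - op β β)).trace / (n:ℂ)) • 1 from rfl]
    rw [sum_sq_tf hn0, sum_sq_diff]
    congr 1
    rw [Matrix.trace_sub, trace_self, trace_self, ← Complex.ofReal_sub, Complex.norm_real,
      Real.norm_eq_abs, _root_.sq_abs, ← ha, ← hb]
  have hD : ∑ i, ∑ j, ‖tf (op β β - op α α) i j‖^2
      = (a^2 + b^2 - 2*T) - (a - b)^2 / n := by
    rw [show tf (op β β - op α α) = (op β β - op α α) -
        (((op β β - op α α)).trace / (n:ℂ)) • 1 from rfl]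
    rw [sum_sq_tf hn0, sum_sq_diff, hconj, RCLike.norm_conj]
    rw [Matrix.trace_sub, trace_self, trace_self, ← Complex.ofReal_sub, Complex.norm_real,
      Real.norm_eq_abs, _root_.sq_abs, ← ha, ← hb, ← hT]
    ring
  have hB : ∑ i, ∑ j, ‖tf (op α β) i j‖^2 = a * b - T / n := by
    rw [show tf (op α β) = (op α β) - (((op α β)).trace / (n:ℂ)) • 1 from rfl]
    rw [sum_sq_tf hn0, sum_sq_op, trace_op, ← ht]
  have hC : ∑ i, ∑ j, ‖tf (op β α) i j‖^2 = a * b - T / n := by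
    rw [show tf (op β α) = (op β α) - (((op β α)).trace / (n:ℂ)) • 1 from rfl]
    rw [sum_sq_tf hn0, sum_sq_op, trace_op, hconj, RCLike.norm_conj, ← hT]
    ring
  -- total
  have hS : ∑ i, ∑ j, ‖mu00 α β α β i j‖^2
      = (1/2) * ((a^2 + b^2 - 2*T) - (a - b)^2 / n) + 2 * (a * b - T / n) := by
    rw [show (∑ i, ∑ j, ‖mu00 α β α β i j‖^2)
        = (∑ i, ∑ j, ‖((1/2:ℂ) • tf (op α α - op β β)) i j‖^2)
          + (∑ i, ∑ j, ‖tf (op α β) i j‖^2)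
          + ((∑ i, ∑ j, ‖tf (op β α) i j‖^2)
          + (∑ i, ∑ j, ‖((1/2:ℂ) • tf (op β β - op α α)) i j‖^2)) from ?_]
    · rw [smul_half, smul_half, hA, hB, hC, hD]; ring
    · simp [mu00, Fintype.sum_sum_type, Finset.sum_add_distrib]
      ring
  -- final inequality
  have hkey : ((1/2) * (a + b))^2 ≤ (1/2) * ((a^2 + b^2 - 2*T) - (a - b)^2 / n) + 2 * (a * b - T / n) := by
    have h1 : (a - b)^2 / (n:ℝ) ≤ (a - b)^2 / 2 :=
      div_le_div_of_nonneg_left (sq_nonneg _) (by norm_num) hn2r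
    have h2 : T / (n:ℝ) ≤ T / 2 := div_le_div_of_nonneg_left hT0 (by norm_num) hn2r
    nlinarith [h1, h2, hCS, hT0]
  have h0 : (0:ℝ) ≤ 1/2 * (a + b) := by linarith
  calc (1/2) * (a + b) = Real.sqrt (((1/2) * (a + b))^2) := (Real.sqrt_sq h0).symm
    _ ≤ fnorm (mu00 α β α β) := by
        rw [fnorm, hS]
        exact Real.sqrt_le_sqrt hkey
end

section
/- Let n ≥ 2, and for Ψ = (α,β) ∈ ℂⁿ ⊕ ℂⁿ define μ₀₀(Ψ,Φ) as the bilinear extension of μ₀₀, i.e. for Ψ = (α,β), Φ = (α',β'), the block matrix ((1/2)((αα'* − ββ'*)₀), (αβ'*)₀; (βα'*)₀, (1/2)((ββ'* − αα'*)₀)). Suppose Ψ₁ = (α₁,β₁) lies in the first summand of a decomposition ℂⁿ = ℂᵏ ⊕ ℂⁿ⁻ᵏ (i.e. α₁, β₁ ∈ ℂᵏ ⊕ 0) and Ψ₂ lies in the second summand, with 1 ≤ k ≤ n−1. If the block-off-diagonal parts of μ₀₀(Ψ₁+Ψ₂) relative to the decomposition vanish (i.e. μ₀₀(Ψ₁,Ψ₂)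 = 0 = μ₀₀(Ψ₂,Ψ₁)), then Ψ₁ = 0 or Ψ₂ = 0. -/
open Matrix

lemma tf_of_trace_zero {n : ℕ} (M : Matrix (Fin n) (Fin n) ℂ) (h : M.trace = 0) :
    tf M = M := by
  simp [tf, h]

lemma op_trace_zero {n : ℕ} (α β : Fin n → ℂ) (h : ∀ i, α i = 0 ∨ β i = 0) :
    (op α β).trace = 0 := by
  rw [Matrix.trace]
  apply Finset.sum_eq_zero
  intro i _
  simp only [Matrix.diag, op, vecMulVec_apply, Pi.star_apply]
  rcases h i with h' | h' <;> simp [h']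

lemma op_eq_zero {n : ℕ} (α β : Fin n → ℂ) (h : op α β = 0) : α = 0 ∨ β = 0 := by
  by_cases hα : α = 0
  · exact Or.inl hα
  · right
    obtain ⟨i, hi⟩ := Function.ne_iff.mp hα
    funext j
    have := congrFun (congrFun h i) j
    simp only [op, vecMulVec_apply, Pi.star_apply, Matrix.zero_apply] at this
    rcases mul_eq_zero.mp this with h' | h'
    · exact absurd h' hi
    · simpa using congrArg star h'

/-- if `Ψ₁ = (α₁,β₁)` is supported in `ℂᵏ ⊕ 0` and `Ψ₂ = (α₂,β₂)` in
`0 ⊕ ℂⁿ⁻ᵏ` (with `1 ≤ k ≤ n−1`), and the cross terms `μ₀₀(Ψ₁,Ψ₂)` and `μ₀₀(Ψ₂,Ψ₁)`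
vanish, then `Ψ₁ = 0` or `Ψ₂ = 0`. -/
theorem stmt_11 (n k : ℕ) (hn : 2 ≤ n) (hk : 1 ≤ k) (hkn : k ≤ n - 1)
    (α₁ β₁ α₂ β₂ : Fin n → ℂ)
    (hα₁ : ∀ i : Fin n, k ≤ (i : ℕ) → α₁ i = 0)
    (hβ₁ : ∀ i : Fin n, k ≤ (i : ℕ) → β₁ i = 0)
    (hα₂ : ∀ i : Fin n, (i : ℕ) < k → α₂ i = 0)
    (hβ₂ : ∀ i : Fin n, (i : ℕ) < k → β₂ i = 0)
    (hcross₁ : mu00 α₁ β₁ α₂ β₂ = 0) (hcross₂ : mu00 α₂ β₂ α₁ β₁ = 0) :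
    (α₁ = 0 ∧ β₁ = 0) ∨ (α₂ = 0 ∧ β₂ = 0) := by
  have disj : ∀ (u v : Fin n → ℂ), (∀ i : Fin n, k ≤ (i : ℕ) → u i = 0) →
      (∀ i : Fin n, (i : ℕ) < k → v i = 0) → ∀ i, u i = 0 ∨ v i = 0 := by
    intro u v hu hv i
    rcases lt_or_ge (i : ℕ) k with h | h
    · exact Or.inr (hv i h)
    · exact Or.inl (hu i h)
  have tαα := op_trace_zero α₁ α₂ (disj _ _ hα₁ hα₂)
  have tββ := op_trace_zero β₁ β₂ (disj _ _ hβ₁ hβ₂)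
  have tαβ := op_trace_zero α₁ β₂ (disj _ _ hα₁ hβ₂)
  have tβα := op_trace_zero β₁ α₂ (disj _ _ hβ₁ hα₂)
  -- extract blocks from hcross₁
  have hB : op α₁ β₂ = 0 := by
    rw [← tf_of_trace_zero _ tαβ]
    ext i j
    have := congrFun (congrFun hcross₁ (Sum.inl i)) (Sum.inr j)
    simpa [mu00, fromBlocks] using this
  have hC : op β₁ α₂ = 0 := by
    rw [← tf_of_trace_zero _ tβα]
    ext i j
    have := congrFun (congrFun hcross₁ (Sum.inr i)) (Sum.inl j)
    simpa [mu00, fromBlocks] using this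
  have hA : op α₁ α₂ = op β₁ β₂ := by
    have htr : (op α₁ α₂ - op β₁ β₂).trace = 0 := by
      rw [Matrix.trace_sub, tαα, tββ, sub_zero]
    have h0 : op α₁ α₂ - op β₁ β₂ = 0 := by
      rw [← tf_of_trace_zero _ htr]
      ext i j
      have := congrFun (congrFun hcross₁ (Sum.inl i)) (Sum.inl j)
      simp only [mu00, fromBlocks, Matrix.zero_apply, Sum.elim_inl,
        Matrix.of_apply, Matrix.smul_apply, smul_eq_mul] at this
      have h2 : (1/2 : ℂ) ≠ 0 := by norm_num
      exact (mul_eq_zero.mp this).resolve_left h2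
    exact sub_eq_zero.mp h0
  rcases op_eq_zero _ _ hB with h1 | h1
  · rcases op_eq_zero _ _ hC with h2 | h2
    · exact Or.inl ⟨h1, h2⟩
    · have : op β₁ β₂ = 0 := by rw [← hA, h1]; ext i j; simp [op, vecMulVec]
      rcases op_eq_zero _ _ this with h3 | h3
      · exact Or.inl ⟨h1, h3⟩
      · exact Or.inr ⟨h2, h3⟩
  · rcases op_eq_zero _ _ hC with h2 | h2
    · have : op α₁ α₂ = 0 := by rw [hA, h1]; ext i j; simp [op, vecMulVec]
      rcases op_eq_zero _ _ this with h3 | h3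
      · exact Or.inl ⟨h3, h2⟩
      · exact Or.inr ⟨h3, h1⟩
    · exact Or.inr ⟨h2, h1⟩
end
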